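/- Let $A$ be a finite subset of $\mathbb{Z}^2$ with $n$ elements, and let $r \ge 0$. If $\mathrm{diam}(A) > 2\theta_{n-1}(r)$, then there exists a partition of $A$ into $k \ge 2$ clusters $A^1,\dots,A^k$ such that each $A^i = A \cap D_{x_i}(\theta^{(i)})$ for some $x_i \in \mathbb{Z}^2$ and radius $\theta^{(i)} \in [r, \theta_{n-1}(r)]$, and for all $i \ne j$, $\mathrm{dist}(A^i, A^j) > \exp(\max\{\theta^{(i)}, \theta^{(j)}\})$. -/

import Mathlib

/-- Iterated exponentials: `θ_0(r) = r`, `θ_m(r) = θ_{m-1}(r) + exp(θ_{m-1}(r))`. -/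
noncomputable def theta : ℕ → ℝ → ℝ
  | 0, r => r
  | m + 1, r => theta m r + Real.exp (theta m r)

/-- Euclidean norm on `ℤ²`. -/
noncomputable def znorm (p : ℤ × ℤ) : ℝ := Real.sqrt ((p.1 : ℝ) ^ 2 + (p.2 : ℝ) ^ 2)

/-- Euclidean distance on `ℤ²`. -/
noncomputable def zdist (p q : ℤ × ℤ) : ℝ := znorm (p - q)

/-!
Start from the singleton clusters of `A` and, as long as two clusters of levels `m₂ ≤ m₁`
come within distance `exp θ_{m₁}(r)` of each other, merge them into one cluster of level
`m₁ + m₂ + 1`, keeping the centre of the higher-level one. Two invariants survive a merge: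
the level is smaller than the number of points, and every point lies within `θ_m(r) - r` of
the centre, because the merged radius is at most `θ_{m₁} + exp θ_{m₁} + 2 (θ_{m₂} - r) - r`, which
`θ_{m₁+m₂+1} - r` absorbs.
The process stops with exponentially separated clusters of level at most `|A| - 1`, so a
single cluster would have diameter at most `2 θ_{|A|-1}(r)`; hence there are at least two,
and then each has level at most `|A| - 2`. Finally, separation by more than
`exp θ > θ` makes each cluster the trace of `A` on the open ball of radius `θ` about its centre.
-/

open Real Finset Topology

lemma theta_succ (m : ℕ) (r : ℝ) : theta (m + 1) r = theta m r + exp (theta m r) := rfl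

lemma monotone_theta (r : ℝ) : Monotone (theta · r) :=
  monotone_nat_of_le_succ fun m => by
    simp only [theta_succ]
    linarith [exp_pos (theta m r)]

lemma le_theta (m : ℕ) (r : ℝ) : r ≤ theta m r := monotone_theta r m.zero_le

lemma continuous_theta : ∀ m, Continuous (theta m)
  | 0 => continuous_id
  | m + 1 => (continuous_theta m).add (continuous_exp.comp (continuous_theta m))

lemma two_mul_le_exp {t : ℝ} (ht : 0 ≤ t) : 2 * t ≤ exp t := by
  nlinarith [quadratic_le_exp_of_nonneg ht, sq_nonneg (t - 1)]

lemma theta_succ_add_two_mul_le {m₁ m₂ : ℕ} {r : ℝ} (hr : 0 ≤ r) (h : m₂ ≤ m₁) :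
    theta (m₁ + 1) r + 2 * (theta m₂ r - r) ≤ theta (m₁ + m₂ + 1) r := by
  rcases m₂ with _ | m₂
  · simp [theta]
  · have h₁ : theta (m₂ + 1) r ≤ theta (m₁ + 1) r := monotone_theta r (by omega)
    have h₂ : theta (m₁ + 1 + 1) r ≤ theta (m₁ + (m₂ + 1) + 1) r := monotone_theta r (by omega)
    have h₃ := two_mul_le_exp (hr.trans (le_theta (m₁ + 1) r))
    rw [theta_succ (m₁ + 1)] at h₂
    linarith

lemma exists_gt_theta_le_theta_succ {m : ℕ} {r d : ℝ} (h : 2 * theta (m + 1) r < d) :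
    ∃ s, r < s ∧ 2 * theta (m + 1) s < d ∧ theta m s ≤ theta (m + 1) r := by
  have h₁ : ∀ᶠ s in 𝓝[>] r, 2 * theta (m + 1) s < d :=
    nhdsWithin_le_nhds
      (((continuous_const.mul (continuous_theta _)).tendsto r).eventually_lt_const h)
  have h₂ : ∀ᶠ s in 𝓝[>] r, theta m s < theta (m + 1) r :=
    nhdsWithin_le_nhds (((continuous_theta m).tendsto r).eventually_lt_const
      (by rw [theta_succ]; linarith [exp_pos (theta m r)]))
  obtain ⟨s, hs, hs₁, hs₂⟩ := (eventually_mem_nhdsWithin.and (h₁.and h₂)).exists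
  exact ⟨s, hs, hs₁, hs₂.le⟩

lemma Finset.card_insert_erase_erase_lt {α : Type*} [DecidableEq α] {s : Finset α} {a b : α}
    (c : α) (ha : a ∈ s) (hb : b ∈ s) (hab : a ≠ b) :
    (insert c ((s.erase a).erase b)).card < s.card := by
  have h₁ := card_erase_of_mem ha
  have h₂ := card_erase_of_mem (mem_erase.2 ⟨hab.symm, hb⟩)
  have h₃ := card_insert_le c ((s.erase a).erase b)
  have h₄ : 1 < s.card := one_lt_card.2 ⟨a, ha, b, hb, hab⟩
  omega

structure Cluster (X : Type*) where
  points : Finset X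
  center : X
  level : ℕ

namespace Cluster

variable {X : Type*}

def singleton (p : X) : Cluster X := ⟨{p}, p, 0⟩

lemma singleton_injective : Function.Injective (singleton : X → Cluster X) :=
  fun _ _ h => congrArg Cluster.center h

def merge [DecidableEq X] (C D : Cluster X) : Cluster X :=
  ⟨C.points ∪ D.points, C.center, C.level + D.level + 1⟩

variable [PseudoMetricSpace X] {r : ℝ} {C D : Cluster X} {p q : X}

structure IsBounded (r : ℝ) (C : Cluster X) : Prop where
  center_mem : C.center ∈ C.points
  level_lt_card : C.level < C.points.card
  dist_center_le : ∀ p ∈ C.points, dist p C.center ≤ theta C.level r - r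

lemma IsBounded.dist_le (hC : C.IsBounded r) (hp : p ∈ C.points) (hq : q ∈ C.points) :
    dist p q ≤ 2 * (theta C.level r - r) := by
  linarith [dist_triangle_right p q C.center, hC.dist_center_le p hp, hC.dist_center_le q hq]

lemma IsBounded.merge [DecidableEq X] (hr : 0 ≤ r) (hC : C.IsBounded r) (hD : D.IsBounded r)
    (hCD : Disjoint C.points D.points) (hle : D.level ≤ C.level) (hp : p ∈ C.points)
    (hq : q ∈ D.points) (hpq : dist p q ≤ exp (theta C.level r)) :
    (C.merge D).IsBounded r where
  center_mem := mem_union_left _ hC.center_mem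
  level_lt_card := by
    have := card_union_of_disjoint hCD
    have := hC.level_lt_card
    have := hD.level_lt_card
    simp only [Cluster.merge]
    omega
  dist_center_le z hz := by
    show dist z C.center ≤ theta (C.level + D.level + 1) r - r
    have hθ := theta_succ_add_two_mul_le hr hle
    rcases mem_union.1 hz with hz | hz
    · have : theta C.level r ≤ theta (C.level + D.level + 1) r := monotone_theta r (by omega)
      linarith [hC.dist_center_le z hz]
    · rw [theta_succ] at hθ
      linarith [dist_triangle4 z q p C.center, dist_triangle_right z q D.center, dist_comm q p,
        hD.dist_center_le z hz, hD.dist_center_le q hq, hC.dist_center_le p hp]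

end Cluster

open Cluster

variable {X : Type*} [PseudoMetricSpace X] {A : Finset X} {r : ℝ} {P : Finset (Cluster X)}
  {C D : Cluster X} {p q x y : X}

structure IsClustering (A : Finset X) (r : ℝ) (P : Finset (Cluster X)) : Prop where
  isBounded : ∀ C ∈ P, C.IsBounded r
  subset : ∀ C ∈ P, C.points ⊆ A
  cover : ∀ p ∈ A, ∃ C ∈ P, p ∈ C.points
  pairwiseDisjoint : (P : Set (Cluster X)).PairwiseDisjoint Cluster.points

def IsExpSeparated (r : ℝ) (P : Finset (Cluster X)) : Prop :=
  ∀ C ∈ P, ∀ D ∈ P, C ≠ D → ∀ p ∈ C.points, ∀ q ∈ D.points,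
    exp (theta (max C.level D.level) r) < dist p q

lemma isClustering_singletons (A : Finset X) (r : ℝ) :
    IsClustering A r (A.map ⟨Cluster.singleton, singleton_injective⟩) where
  isBounded := by
    simp only [mem_map, Function.Embedding.coeFn_mk, forall_exists_index, and_imp,
      forall_apply_eq_imp_iff₂]
    exact fun p _ => ⟨mem_singleton_self p, by simp [Cluster.singleton],
      by simp [Cluster.singleton, theta]⟩
  subset := by
    simp only [mem_map, Function.Embedding.coeFn_mk, forall_exists_index, and_imp,
      forall_apply_eq_imp_iff₂]
    exact fun p hp => singleton_subset_iff.2 hp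
  cover p hp := ⟨Cluster.singleton p, mem_map_of_mem _ hp, mem_singleton_self p⟩
  pairwiseDisjoint := by
    simp only [coe_map, Function.Embedding.coeFn_mk]
    rintro _ ⟨p, -, rfl⟩ _ ⟨q, -, rfl⟩ hpq
    exact disjoint_singleton.2 fun h => hpq (h ▸ rfl)

lemma IsClustering.merge [DecidableEq X] [DecidableEq (Cluster X)] (hr : 0 ≤ r)
    (hP : IsClustering A r P) (hC : C ∈ P) (hD : D ∈ P) (hCD : C ≠ D) (hle : D.level ≤ C.level) (hp : p ∈ C.points) (hq : q ∈ D.points)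
    (hpq : dist p q ≤ exp (theta C.level r)) :
    IsClustering A r (insert (C.merge D) ((P.erase C).erase D)) := by
  have hmem : ∀ E ∈ (P.erase C).erase D, E ∈ P ∧ E ≠ C ∧ E ≠ D := fun E hE => by
    simp only [mem_erase] at hE
    exact ⟨hE.2.2, hE.2.1, hE.1⟩
  have hdisj : ∀ E ∈ (P.erase C).erase D, Disjoint (C.merge D).points E.points := by
    intro E hE
    obtain ⟨hE, hEC, hED⟩ := hmem E hE
    exact disjoint_union_left.2
      ⟨hP.pairwiseDisjoint hC hE hEC.symm, hP.pairwiseDisjoint hD hE hED.symm⟩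
  refine ⟨?_, ?_, fun z hz => ?_, ?_⟩
  · simp only [forall_mem_insert]
    exact ⟨(hP.isBounded C hC).merge hr (hP.isBounded D hD) (hP.pairwiseDisjoint hC hD hCD)
      hle hp hq hpq, fun E hE => hP.isBounded E (hmem E hE).1⟩
  · simp only [forall_mem_insert]
    exact ⟨union_subset (hP.subset C hC) (hP.subset D hD), fun E hE => hP.subset E (hmem E hE).1⟩
  · obtain ⟨E, hE, hzE⟩ := hP.cover z hz
    by_cases hE' : E = C ∨ E = D
    · refine ⟨C.merge D, mem_insert_self _ _, mem_union.2 ?_⟩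
      rcases hE' with rfl | rfl <;> tauto
    · push Not at hE'
      exact ⟨E, mem_insert_of_mem (mem_erase.2 ⟨hE'.2, mem_erase.2 ⟨hE'.1, hE⟩⟩), hzE⟩
  · rw [coe_insert]
    exact ((hP.pairwiseDisjoint.subset fun E hE => (hmem E hE).1).insert
      fun E hE _ => hdisj E hE)

lemma IsClustering.exists_isExpSeparated (hr : 0 ≤ r) (hP : IsClustering A r P) :
    ∃ Q, IsClustering A r Q ∧ IsExpSeparated r Q := by
  classical
  induction hcard : P.card using Nat.strong_induction_on generalizing P with
  | _ n ih =>
    by_cases hsep : IsExpSeparated r P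
    · exact ⟨P, hP, hsep⟩
    simp only [IsExpSeparated, not_forall, not_lt] at hsep
    obtain ⟨C, hC, D, hD, hCD, p, hp, q, hq, hpq⟩ := hsep
    wlog hle : D.level ≤ C.level generalizing C D p q
    · exact this D hD C hC hCD.symm q hq p hp (by rwa [max_comm, dist_comm]) (by omega)
    rw [max_eq_left hle] at hpq
    exact ih _ (hcard ▸ card_insert_erase_erase_lt _ hC hD hCD)
      (hP.merge hr hC hD hCD hle hp hq hpq) rfl

lemma IsClustering.one_lt_card (hr : 0 ≤ r) (hP : IsClustering A r P) (hx : x ∈ A)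
    (hy : y ∈ A) (hxy : 2 * theta (A.card - 1) r < dist x y) : 1 < P.card := by
  by_contra! h
  obtain ⟨C, hC, hxC⟩ := hP.cover x hx
  obtain ⟨D, hD, hyD⟩ := hP.cover y hy
  obtain rfl : C = D := card_le_one.1 h C hC D hD
  have hlevel : C.level ≤ A.card - 1 := by
    have := card_le_card (hP.subset C hC)
    have := (hP.isBounded C hC).level_lt_card
    omega
  have : theta C.level r ≤ theta (A.card - 1) r := monotone_theta r hlevel
  linarith [(hP.isBounded C hC).dist_le hxC hyD]

lemma IsClustering.level_add_two_le_card (hP : IsClustering A r P) (hP₁ : 1 < P.card)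
    (hC : C ∈ P) : C.level + 2 ≤ A.card := by
  classical
  obtain ⟨D, hD, hDC⟩ := exists_mem_ne hP₁ C
  have hcard := card_le_card (union_subset (hP.subset C hC) (hP.subset D hD))
  rw [card_union_of_disjoint (hP.pairwiseDisjoint hC hD hDC.symm)] at hcard
  have := card_pos.2 ⟨_, (hP.isBounded D hD).center_mem⟩
  have := (hP.isBounded C hC).level_lt_card
  omega

lemma IsClustering.mem_points_iff (hr : 0 < r) (hP : IsClustering A r P)
    (hsep : IsExpSeparated r P) (hC : C ∈ P) :
    p ∈ C.points ↔ p ∈ A ∧ dist p C.center < theta C.level r := by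
  refine ⟨fun hp => ⟨hP.subset C hC hp, ?_⟩, fun ⟨hpA, hpC⟩ => ?_⟩
  · linarith [(hP.isBounded C hC).dist_center_le p hp]
  obtain ⟨D, hD, hpD⟩ := hP.cover p hpA
  by_contra hp
  have hDC : D ≠ C := by rintro rfl; exact hp hpD
  have := hsep D hD C hC hDC p hpD C.center (hP.isBounded C hC).center_mem
  have : theta C.level r ≤ theta (max D.level C.level) r := monotone_theta r (le_max_right _ _)
  linarith [add_one_le_exp (theta (max D.level C.level) r)]

/-- The perturbation `r < s` is needed because the clusters are open balls of radius `θ(s)`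
while the invariant only puts them in closed balls of radius `θ(s) - s`. -/
theorem exists_expSeparated_ball_partition (A : Finset X) (hr : 0 ≤ r)
    (hdiam : ∃ x ∈ A, ∃ y ∈ A, 2 * theta (A.card - 1) r < dist x y) :
    ∃ k : ℕ, 2 ≤ k ∧
      ∃ (As : Fin k → Finset X) (c : Fin k → X) (ρ : Fin k → ℝ),
        (∀ i, (As i).Nonempty) ∧
        (∀ i, r ≤ ρ i ∧ ρ i ≤ theta (A.card - 1) r) ∧
        (∀ i, ∀ p : X, p ∈ As i ↔ p ∈ A ∧ dist p (c i) < ρ i) ∧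
        (∀ p ∈ A, ∃ i, p ∈ As i) ∧
        (∀ i j, i ≠ j → Disjoint (As i) (As j)) ∧
        (∀ i j, i ≠ j → ∀ p ∈ As i, ∀ q ∈ As j,
          exp (max (ρ i) (ρ j)) < dist p q) := by
  obtain ⟨x, hx, y, hy, hxy⟩ := hdiam
  have hA : 2 ≤ A.card := by
    have hxy' : x ≠ y := by
      rintro rfl
      linarith [hr.trans (le_theta (A.card - 1) r), dist_self x]
    have := one_lt_card.2 ⟨x, hx, y, hy, hxy'⟩
    omega
  have hcard : A.card - 1 = A.card - 2 + 1 := by omega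
  rw [hcard] at hxy ⊢
  obtain ⟨s, hrs, hxy, hθ⟩ := exists_gt_theta_le_theta_succ hxy
  have hs : 0 < s := hr.trans_lt hrs
  obtain ⟨P, hP, hsep⟩ := (isClustering_singletons A s).exists_isExpSeparated hs.le
  have hP₁ := hP.one_lt_card hs.le hx hy (by rwa [hcard])
  let e : Fin P.card → Cluster X := fun i => P.equivFin.symm i
  have he : ∀ i, e i ∈ P := fun i => (P.equivFin.symm i).2
  have he_inj : Function.Injective e := Subtype.val_injective.comp P.equivFin.symm.injective
  refine ⟨P.card, hP₁, fun i => (e i).points, fun i => (e i).center,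
    fun i => theta (e i).level s, fun i => ⟨_, (hP.isBounded _ (he i)).center_mem⟩,
    fun i => ⟨hrs.le.trans (le_theta _ s), ?_⟩, fun i p => hP.mem_points_iff hs hsep (he i),
    fun p hp => ?_, fun i j hij => hP.pairwiseDisjoint (he i) (he j) (he_inj.ne hij),
    fun i j hij p hp q hq => ?_⟩
  · have : theta (e i).level s ≤ theta (A.card - 2) s :=
      monotone_theta s (by have := hP.level_add_two_le_card hP₁ (he i); omega)
    exact this.trans hθ
  · obtain ⟨C, hC, hpC⟩ := hP.cover p hp
    exact ⟨P.equivFin ⟨C, hC⟩, by simpa [e] using hpC⟩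
  · rw [← (monotone_theta s).map_max]
    exact hsep _ (he i) _ (he j) (he_inj.ne hij) p hp q hq

def toComplex (p : ℤ × ℤ) : ℂ := ⟨p.1, p.2⟩

lemma zdist_eq_dist_toComplex (p q : ℤ × ℤ) :
    zdist p q = dist (toComplex p) (toComplex q) := by
  simp [zdist, znorm, toComplex, Complex.dist_eq_re_im]

/-- Exponential clustering (Lemma 4.2): if a finite `A ⊂ ℤ²` with `n` elements has
diameter greater than `2 θ_{n-1}(r)`, then `A` can be partitioned into `k ≥ 2`
clusters `A^i = A ∩ D_{x_i}(θ^{(i)})` with radii `θ^{(i)} ∈ [r, θ_{n-1}(r)]`, such that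
distinct clusters are at distance greater than `exp(max{θ^{(i)}, θ^{(j)}})`. -/
theorem stmt4 (A : Finset (ℤ × ℤ)) (n : ℕ) (hn : A.card = n) (r : ℝ) (hr : 0 ≤ r)
    (hdiam : ∃ x ∈ A, ∃ y ∈ A, 2 * theta (n - 1) r < zdist x y) :
    ∃ k : ℕ, 2 ≤ k ∧
      ∃ (As : Fin k → Finset (ℤ × ℤ)) (c : Fin k → ℤ × ℤ) (ρ : Fin k → ℝ),
        (∀ i, (As i).Nonempty) ∧
        (∀ i, r ≤ ρ i ∧ ρ i ≤ theta (n - 1) r) ∧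
        (∀ i, ∀ p : ℤ × ℤ, p ∈ As i ↔ p ∈ A ∧ zdist p (c i) < ρ i) ∧
        (∀ p ∈ A, ∃ i, p ∈ As i) ∧
        (∀ i j, i ≠ j → Disjoint (As i) (As j)) ∧
        (∀ i j, i ≠ j → ∀ p ∈ As i, ∀ q ∈ As j,
          Real.exp (max (ρ i) (ρ j)) < zdist p q) := by
  let : PseudoMetricSpace (ℤ × ℤ) := PseudoMetricSpace.induced toComplex inferInstance
  have hdist : ∀ p q : ℤ × ℤ, zdist p q = dist p q := zdist_eq_dist_toComplex
  subst hn
  simp only [hdist] at hdiam ⊢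
  exact exists_expSeparated_ball_partition A hr hdiam
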